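/- If D is a digraph that contains no necklace as a subdigraph, then the dichromatic number of D is countable; that is, V(D) admits a partition into countably many classes each of which induces a subdigraph with no directed cycle. -/

import Mathlib

variable {V : Type*}

/-- Reachability from `a` to `b` by a directed walk staying inside the vertex set `S`. -/
def ReachIn (D : V → V → Prop) (S : Set V) (a b : V) : Prop :=
  a ∈ S ∧ b ∈ S ∧ Relation.ReflTransGen (fun x y => y ∈ S ∧ D x y) a b

/-- `C` is a strong component of the subdigraph of `D` induced on `S`. -/
def IsSCCIn (D : V → V → Prop) (S : Set V) (C : Set V) : Prop :=
  ∃ a ∈ S, C = {b | ReachIn D S a b ∧ ReachIn D S b a}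

/-- A directed ray in `D`. -/
def IsRay (D : V → V → Prop) (R : ℕ → V) : Prop :=
  Function.Injective R ∧ ∀ n, D (R n) (R (n + 1))

/-- A reverse directed ray in `D`. -/
def IsRevRay (D : V → V → Prop) (R : ℕ → V) : Prop :=
  Function.Injective R ∧ ∀ n, D (R (n + 1)) (R n)

/-- The ray `R` has a tail inside the vertex set `C`. -/
def HasTailIn (R : ℕ → V) (C : Set V) : Prop :=
  ∃ n, ∀ m, n ≤ m → R m ∈ C

/-- A solid ray: for every finite `X` it has a tail in some strong component of `D − X`. -/
def Solid (D : V → V → Prop) (R : ℕ → V) : Prop :=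
  IsRay D R ∧ ∀ X : Finset V, ∃ C, IsSCCIn D ((↑X : Set V)ᶜ) C ∧ HasTailIn R C

/-- Two solid rays are end-equivalent: for every finite `X` they have tails in the same
strong component of `D − X`. -/
def EndEquiv (D : V → V → Prop) (R R' : ℕ → V) : Prop :=
  ∀ X : Finset V, ∃ C, IsSCCIn D ((↑X : Set V)ᶜ) C ∧ HasTailIn R C ∧ HasTailIn R' C

/-- `Ω` is an end of `D`: the class of solid rays equivalent to some solid ray. -/
def IsEnd (D : V → V → Prop) (Ω : Set (ℕ → V)) : Prop :=
  ∃ R, Solid D R ∧ Ω = {R' | Solid D R' ∧ EndEquiv D R R'}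

/-- A (nonempty) directed path, recorded as its list of vertices. -/
def IsPathList (D : V → V → Prop) (l : List V) : Prop :=
  l ≠ [] ∧ l.Nodup ∧ l.Chain' D

/-- Infinitely many pairwise disjoint `A`–`B` paths in `D` (each meeting `A` precisely in its
first vertex and `B` precisely in its last vertex). -/
def DisjointPathsFrom (D : V → V → Prop) (A B : Set V) : Prop :=
  ∃ P : ℕ → List V,
    (∀ k, IsPathList D (P k)) ∧
    (∀ j k, j ≠ k → ∀ x ∈ P j, x ∉ P k) ∧
    (∀ k, ∃ a, (P k).head? = some a ∧ a ∈ A) ∧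
    (∀ k, ∃ b, (P k).getLast? = some b ∧ b ∈ B) ∧
    (∀ k, ∀ x ∈ (P k).tail, x ∉ A) ∧
    (∀ k, ∀ x ∈ (P k).dropLast, x ∉ B)

/-- A necklace in `D`: an inflated symmetric ray with finite branch sets (beads), given by its
beads together with the connecting (subdividing) paths in both directions. -/
structure Necklace (D : V → V → Prop) where
  bead : ℕ → Set V
  fwd : ℕ → List V
  bwd : ℕ → List V
  bead_fin : ∀ n, (bead n).Finite
  bead_nonempty : ∀ n, (bead n).Nonempty
  bead_disj : ∀ m n, m ≠ n → Disjoint (bead m) (bead n)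
  bead_strong : ∀ n, ∀ a ∈ bead n, ∀ b ∈ bead n, ReachIn D (bead n) a b
  fwd_path : ∀ n, IsPathList D (fwd n)
  bwd_path : ∀ n, IsPathList D (bwd n)
  fwd_head : ∀ n a, (fwd n).head? = some a → a ∈ bead n
  fwd_last : ∀ n b, (fwd n).getLast? = some b → b ∈ bead (n + 1)
  bwd_head : ∀ n a, (bwd n).head? = some a → a ∈ bead (n + 1)
  bwd_last : ∀ n b, (bwd n).getLast? = some b → b ∈ bead n
  fwd_inner : ∀ n, ∀ x ∈ (fwd n).tail.dropLast, ∀ m, x ∉ bead m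
  bwd_inner : ∀ n, ∀ x ∈ (bwd n).tail.dropLast, ∀ m, x ∉ bead m
  fwd_fwd_disj : ∀ m n, m ≠ n → ∀ x ∈ (fwd m).tail.dropLast, x ∉ (fwd n).tail.dropLast
  bwd_bwd_disj : ∀ m n, m ≠ n → ∀ x ∈ (bwd m).tail.dropLast, x ∉ (bwd n).tail.dropLast
  fwd_bwd_disj : ∀ m n, ∀ x ∈ (fwd m).tail.dropLast, x ∉ (bwd n).tail.dropLast

/-- The vertex set of a necklace. -/
def Necklace.verts {D : V → V → Prop} (N : Necklace D) : Set V :=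
  (⋃ n, N.bead n) ∪ {x | ∃ n, x ∈ N.fwd n ∨ x ∈ N.bwd n}

/-- A necklace is attached to `𝒰` if infinitely many of its beads meet every set in `𝒰`. -/
def Necklace.AttachedTo {D : V → V → Prop} (N : Necklace D) (𝒰 : Finset (Set V)) : Prop :=
  {n | ∀ U ∈ 𝒰, (N.bead n ∩ U).Nonempty}.Infinite

/-- A necklace represents the end of the solid ray `R`: for every finite `X`, all but finitely
many beads lie in the strong component of `D − X` in which `R` has a tail. -/
def NecklaceRepresents {D : V → V → Prop} (N : Necklace D) (R : ℕ → V) : Prop :=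
  ∀ X : Finset V, ∃ C, IsSCCIn D ((↑X : Set V)ᶜ) C ∧ HasTailIn R C ∧
    ∃ n₀, ∀ n, n₀ ≤ n → N.bead n ⊆ C

/-- `URankLE D 𝒰 S α`: the subdigraph of `D` induced on `S` has `𝒰`-rank at most `α`. -/
inductive URankLE (D : V → V → Prop) (𝒰 : Finset (Set V)) : Set V → Ordinal → Prop
  | base (S : Set V) (α : Ordinal) (U : Set V) (hU : U ∈ 𝒰) (h : (U ∩ S).Finite) :
      URankLE D 𝒰 S α
  | step (S : Set V) (α : Ordinal) (X : Finset V) (r : Set V → Ordinal)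
      (hr : ∀ C, IsSCCIn D (S \ ↑X) C → r C < α)
      (h : ∀ C, IsSCCIn D (S \ ↑X) C → URankLE D 𝒰 C (r C)) :
      URankLE D 𝒰 S α

/-- `D` (induced on `S`) has `𝒰`-rank exactly `α`. -/
def HasURank (D : V → V → Prop) (𝒰 : Finset (Set V)) (S : Set V) (α : Ordinal) : Prop :=
  URankLE D 𝒰 S α ∧ ∀ β < α, ¬ URankLE D 𝒰 S β

/-- A vertex-direction of `D`. -/
def IsVertexDirection (D : V → V → Prop) (f : Finset V → Set V) : Prop :=
  (∀ X : Finset V, IsSCCIn D ((↑X : Set V)ᶜ) (f X)) ∧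
  ∀ X Y : Finset V, X ⊆ Y → f Y ⊆ f X

/-- A separation `(A,B)` of `D`: `A ∪ B = V(D)` and no edge from `B∖A` to `A∖B`. -/
def IsSep (D : V → V → Prop) (A B : Set V) : Prop :=
  A ∪ B = Set.univ ∧ ∀ a ∈ B \ A, ∀ b ∈ A \ B, ¬ D a b

/-- A finite order separation `(A,B)` points towards the vertex-direction `f`. -/
def PointsTowards (D : V → V → Prop) (f : Finset V → Set V) (A B : Set V)
    (h : (A ∩ B).Finite) : Prop :=
  f h.toFinset ⊆ B \ A

/-- A finite order separation `(A,B)` points away from the vertex-direction `f`. -/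
def PointsAway (D : V → V → Prop) (f : Finset V → Set V) (A B : Set V)
    (h : (A ∩ B).Finite) : Prop :=
  f h.toFinset ⊆ A \ B

/-- The vertex `v` dominates the vertex-direction `f`. -/
def DomDir (D : V → V → Prop) (v : V) (f : Finset V → Set V) : Prop :=
  ∀ A B, IsSep D A B → ∀ h : (A ∩ B).Finite, PointsAway D f A B h → v ∈ A

/-- An infinite `v`–`B` fan: infinitely many `v`–`B` paths meeting pairwise precisely in `v`. -/
def Fan (D : V → V → Prop) (v : V) (B : Set V) : Prop :=
  ∃ P : ℕ → List V,
    (∀ k, IsPathList D (P k)) ∧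
    (∀ k, (P k).head? = some v) ∧
    (∀ k, 2 ≤ (P k).length) ∧
    (∀ k, ∃ b, (P k).getLast? = some b ∧ b ∈ B) ∧
    (∀ k, ∀ x ∈ (P k).dropLast, x ∉ B) ∧
    (∀ j k, j ≠ k → ∀ x ∈ (P j).tail, x ∉ (P k).tail)

/-- Limit edge between the ends of the solid rays `R` and `R'`. -/
def LimitEdgeEE (D : V → V → Prop) (R R' : ℕ → V) : Prop :=
  ∀ (X : Finset V) C C', IsSCCIn D ((↑X : Set V)ᶜ) C → HasTailIn R C →
    IsSCCIn D ((↑X : Set V)ᶜ) C' → HasTailIn R' C' → C ≠ C' →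
    ∃ a ∈ C, ∃ b ∈ C', D a b

/-- Limit edge from the vertex `v` to the end of the solid ray `R`. -/
def LimitEdgeVE (D : V → V → Prop) (v : V) (R : ℕ → V) : Prop :=
  ∀ (X : Finset V) C, IsSCCIn D ((↑X : Set V)ᶜ) C → HasTailIn R C → v ∉ C →
    ∃ b ∈ C, D v b

/-- Limit edge from the end of the solid ray `R` to the vertex `v`. -/
def LimitEdgeEV (D : V → V → Prop) (R : ℕ → V) (v : V) : Prop :=
  ∀ (X : Finset V) C, IsSCCIn D ((↑X : Set V)ᶜ) C → HasTailIn R C → v ∉ C →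
    ∃ a ∈ C, D a v

/-- A subdivided infinite out-star in `D` with centre `c`, given by its paths. -/
def IsStar (D : V → V → Prop) (c : V) (P : ℕ → List V) : Prop :=
  (∀ k, IsPathList D (P k)) ∧ (∀ k, (P k).head? = some c) ∧
  (∀ k, 2 ≤ (P k).length) ∧
  (∀ j k, j ≠ k → ∀ x ∈ (P j).tail, x ∉ (P k).tail)

/-- A directed comb in `D` with spine `R`, given by its (pairwise disjoint) paths each meeting
`R` precisely in its first vertex. -/
def IsComb (D : V → V → Prop) (R : ℕ → V) (P : ℕ → List V) : Prop :=
  IsRay D R ∧ (∀ k, IsPathList D (P k)) ∧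
  (∀ k, ∃ n, (P k).head? = some (R n)) ∧
  (∀ k, ∀ x ∈ (P k).tail, ∀ n, x ≠ R n) ∧
  (∀ j k, j ≠ k → ∀ x ∈ P j, x ∉ P k)

/-- A star in `D` whose `k`-th leaf is `a k`. -/
def StarAttachedWith (D : V → V → Prop) (a : ℕ → V) : Prop :=
  ∃ c P, IsStar D c P ∧ ∀ k, (P k).getLast? = some (a k)

/-- A comb in `D` whose `k`-th tooth is `a k`. -/
def CombAttachedWith (D : V → V → Prop) (a : ℕ → V) : Prop :=
  ∃ R P, IsComb D R P ∧ ∀ k, (P k).getLast? = some (a k)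

/-- `a` and `b` are consecutive entries of the list `l`. -/
def AdjInList (l : List V) (a b : V) : Prop :=
  ∃ l₁ l₂, l = l₁ ++ a :: b :: l₂

/-- The edge relation of (a subdigraph of `D` forming) the necklace `N`: all `D`-edges inside a
bead together with the edges of the connecting paths. -/
def Necklace.edges {D : V → V → Prop} (N : Necklace D) (a b : V) : Prop :=
  D a b ∧ ((∃ n, a ∈ N.bead n ∧ b ∈ N.bead n) ∨
    (∃ n, AdjInList (N.fwd n) a b ∨ AdjInList (N.bwd n) a b))

/-- A generalized ray: a directed ray (`true`) or a reverse directed ray (`false`). -/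
def IsGenRay (D : V → V → Prop) : Bool × (ℕ → V) → Prop
  | (true, R) => IsRay D R
  | (false, R) => IsRevRay D R

/-- Pre-end equivalence of generalized rays: infinitely many disjoint paths in both
directions. -/
def PreEquiv (D : V → V → Prop) (Q Q' : Bool × (ℕ → V)) : Prop :=
  DisjointPathsFrom D (Set.range Q.2) (Set.range Q'.2) ∧
  DisjointPathsFrom D (Set.range Q'.2) (Set.range Q.2)

/-- The pre-end `γ` includes the end represented by the solid ray `R`. -/
def IncludesEnd (D : V → V → Prop) (γ : Set (Bool × (ℕ → V))) (R : ℕ → V) : Prop :=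
  Solid D R ∧ ∀ R', Solid D R' → EndEquiv D R R' → (true, R') ∈ γ

/-- The set of edges of `D` from `A` to `B`. -/
def EdgesBetween (D : V → V → Prop) (A B : Set V) : Set (V × V) :=
  {e | D e.1 e.2 ∧ e.1 ∈ A ∧ e.2 ∈ B}

/-- A bundle of `D − X`. -/
def IsBundle (D : V → V → Prop) (X : Finset V) (E : Set (V × V)) : Prop :=
  E.Nonempty ∧
  ((∃ C C', IsSCCIn D ((↑X : Set V)ᶜ) C ∧ IsSCCIn D ((↑X : Set V)ᶜ) C' ∧ C ≠ C' ∧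
      E = EdgesBetween D C C') ∨
   (∃ v ∈ X, ∃ C, IsSCCIn D ((↑X : Set V)ᶜ) C ∧
      (E = EdgesBetween D {v} C ∨ E = EdgesBetween D C {v})))

/-- Compatibility `f(X) ⊇ f(Y)` between values of a direction (a strong component is regarded
as containing a bundle if it contains all its edges). -/
def DirCompat : Set V ⊕ Set (V × V) → Set V ⊕ Set (V × V) → Prop
  | Sum.inl C, Sum.inl C' => C' ⊆ C
  | Sum.inl C, Sum.inr E' => ∀ e ∈ E', e.1 ∈ C ∧ e.2 ∈ C
  | Sum.inr _, Sum.inl _ => False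
  | Sum.inr E, Sum.inr E' => E' ⊆ E

/-- A direction of `D`: maps each finite `X` to a strong component or a bundle of `D − X`,
compatibly. -/
def IsDirection (D : V → V → Prop) (f : Finset V → Set V ⊕ Set (V × V)) : Prop :=
  (∀ X : Finset V, (∃ C, IsSCCIn D ((↑X : Set V)ᶜ) C ∧ f X = Sum.inl C) ∨
    (∃ E, IsBundle D X E ∧ f X = Sum.inr E)) ∧
  ∀ X Y : Finset V, X ⊆ Y → DirCompat (f X) (f Y)

/-- An edge-direction: a direction whose value is a bundle for some finite `X`. -/
def IsEdgeDirection (D : V → V → Prop) (f : Finset V → Set V ⊕ Set (V × V)) : Prop :=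
  IsDirection D f ∧ ∃ (X : Finset V) (E : Set (V × V)), f X = Sum.inr E

/-- The three kinds of (potential) limit edges: end–end, vertex–end, end–vertex.
Ends are given as sets of (solid) rays. -/
inductive LimitEdgeObj (V : Type*) where
  | ee (Ω₁ Ω₂ : Set (ℕ → V))
  | ve (v : V) (Ω : Set (ℕ → V))
  | ev (Ω : Set (ℕ → V)) (v : V)

/-- `l` is a limit edge of `D`. -/
def IsLimitEdge (D : V → V → Prop) : LimitEdgeObj V → Prop
  | LimitEdgeObj.ee Ω₁ Ω₂ => IsEnd D Ω₁ ∧ IsEnd D Ω₂ ∧ Ω₁ ≠ Ω₂ ∧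
      ∀ R ∈ Ω₁, ∀ R' ∈ Ω₂, LimitEdgeEE D R R'
  | LimitEdgeObj.ve v Ω => IsEnd D Ω ∧ ∀ R ∈ Ω, LimitEdgeVE D v R
  | LimitEdgeObj.ev Ω v => IsEnd D Ω ∧ ∀ R ∈ Ω, LimitEdgeEV D R v

/-- `f` agrees with the map `f_λ` for the end–end limit edge `Ω₁Ω₂`. -/
def AgreesEE (D : V → V → Prop) (Ω₁ Ω₂ : Set (ℕ → V))
    (f : Finset V → Set V ⊕ Set (V × V)) : Prop :=
  ∀ (X : Finset V), ∀ R ∈ Ω₁, ∀ R' ∈ Ω₂, ∀ C C',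
    IsSCCIn D ((↑X : Set V)ᶜ) C → HasTailIn R C →
    IsSCCIn D ((↑X : Set V)ᶜ) C' → HasTailIn R' C' →
    (C = C' → f X = Sum.inl C) ∧ (C ≠ C' → f X = Sum.inr (EdgesBetween D C C'))

/-- `f` agrees with the map `f_λ` for the vertex–end limit edge `vΩ`. -/
def AgreesVE (D : V → V → Prop) (v : V) (Ω : Set (ℕ → V))
    (f : Finset V → Set V ⊕ Set (V × V)) : Prop :=
  ∀ (X : Finset V), ∀ R ∈ Ω, ∀ C, IsSCCIn D ((↑X : Set V)ᶜ) C → HasTailIn R C →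
    (v ∈ C → f X = Sum.inl C) ∧
    (v ∈ (↑X : Set V) → f X = Sum.inr (EdgesBetween D {v} C)) ∧
    (∀ C', IsSCCIn D ((↑X : Set V)ᶜ) C' → v ∈ C' → C' ≠ C →
      f X = Sum.inr (EdgesBetween D C' C))

/-- `f` agrees with the map `f_λ` for the end–vertex limit edge `Ωv`. -/
def AgreesEV (D : V → V → Prop) (Ω : Set (ℕ → V)) (v : V)
    (f : Finset V → Set V ⊕ Set (V × V)) : Prop :=
  ∀ (X : Finset V), ∀ R ∈ Ω, ∀ C, IsSCCIn D ((↑X : Set V)ᶜ) C → HasTailIn R C →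
    (v ∈ C → f X = Sum.inl C) ∧
    (v ∈ (↑X : Set V) → f X = Sum.inr (EdgesBetween D C {v})) ∧
    (∀ C', IsSCCIn D ((↑X : Set V)ᶜ) C' → v ∈ C' → C' ≠ C →
      f X = Sum.inr (EdgesBetween D C C'))

/-- `f` agrees with `f_λ` for the limit edge `l`. -/
def Agrees (D : V → V → Prop) : LimitEdgeObj V → (Finset V → Set V ⊕ Set (V × V)) → Prop
  | LimitEdgeObj.ee Ω₁ Ω₂, f => AgreesEE D Ω₁ Ω₂ f
  | LimitEdgeObj.ve v Ω, f => AgreesVE D v Ω f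
  | LimitEdgeObj.ev Ω v, f => AgreesEV D Ω v f

/-!
Rank vertex sets by ordinals: a finite set has every rank, and `S` has rank at most `α` if
deleting some finite `X` leaves strong components of `S - X` of rank less than `α`. A ranked set
is countably dicolourable by induction on the rank: colour `X` injectively and every strong
component of `S - X` by its own colouring, as a closed walk of `S - X` stays in one strong
component.

If `V(D)` is unranked, every finite deletion leaves an unranked strong component, and a necklace
is built greedily. Inside an unranked strongly connected `C` containing `p` and `q`, choose a
finite set carrying walks `p → q → p`, an unranked strong component `C'` of the rest, and walks
`p → C' → p`. The bead is the strong component of `p` in the finite set `H` of all vertices of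
these walks outside `C'`. A path from the bead to `C'` and one from `C'` back to the bead, each
meeting the bead and `C'` only in its ends, have disjoint interiors: a common inner vertex would
lie in the strong component of `p` in `H`. Recursing into `C'` gives the necklace.
-/

open Set
open scoped Function

section Reachability

variable {D : V → V → Prop} {S T : Set V} {a b c : V}

theorem ReachIn.refl (ha : a ∈ S) : ReachIn D S a a := ⟨ha, ha, .refl⟩

theorem ReachIn.single (ha : a ∈ S) (hb : b ∈ S) (hab : D a b) : ReachIn D S a b :=
  ⟨ha, hb, .single ⟨hb, hab⟩⟩

theorem ReachIn.trans (hab : ReachIn D S a b) (hbc : ReachIn D S b c) : ReachIn D S a c :=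
  ⟨hab.1, hbc.2.1, hab.2.2.trans hbc.2.2⟩

theorem ReachIn.mono (hST : S ⊆ T) (hab : ReachIn D S a b) : ReachIn D T a b :=
  ⟨hST hab.1, hST hab.2.1, Relation.ReflTransGen.mono (fun _ _ h => ⟨hST h.1, h.2⟩) _ _ hab.2.2⟩

theorem ReachIn.exists_finite (hab : ReachIn D S a b) :
    ∃ F : Set V, F.Finite ∧ F ⊆ S ∧ ReachIn D F a b := by
  obtain ⟨ha, -, hab⟩ := hab
  induction hab with
  | refl => exact ⟨{a}, finite_singleton a, singleton_subset_iff.2 ha, .refl rfl⟩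
  | @tail c d _ hcd ih =>
    obtain ⟨F, hF, hFS, hac⟩ := ih
    exact ⟨insert d F, hF.insert d, insert_subset hcd.1 hFS,
      (hac.mono (subset_insert d F)).trans
        (.single (subset_insert d F hac.2.1) (mem_insert d F) hcd.2)⟩

theorem isChain_reachIn {l : List V} (hl : l.IsChain D) (hT : ∀ x ∈ l, x ∈ T) :
    l.IsChain (ReachIn D T) :=
  hl.imp_of_mem_imp fun u v hu hv huv => .single (hT u hu) (hT v hv) huv

theorem reachIn_head_of_isChain {l : List V} (hl : l.IsChain D) (hT : ∀ x ∈ l, x ∈ T)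
    (ha : l.head? = some a) {x : V} (hx : x ∈ l) : ReachIn D T a x := by
  rw [List.head?_eq_some_head (List.ne_nil_of_mem hx), Option.some_inj] at ha
  subst ha
  exact (isChain_reachIn hl hT).induction (ReachIn D T _ ·) l (fun _ _ h₁ h₂ => h₂.trans h₁)
    (fun _ => .refl (hT _ (List.head_mem _))) x hx

theorem reachIn_getLast_of_isChain {l : List V} (hl : l.IsChain D) (hT : ∀ x ∈ l, x ∈ T)
    (hb : l.getLast? = some b) {x : V} (hx : x ∈ l) : ReachIn D T x b := by
  rw [List.getLast?_eq_some_getLast (List.ne_nil_of_mem hx), Option.some_inj] at hb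
  subst hb
  exact (isChain_reachIn hl hT).backwards_induction (ReachIn D T · _) l
    (fun _ _ h₁ h₂ => h₁.trans h₂) (fun _ => .refl (hT _ (List.getLast_mem _))) x hx

end Reachability

def StronglyConnectedIn (D : V → V → Prop) (S : Set V) : Prop :=
  ∀ a ∈ S, ∀ b ∈ S, ReachIn D S a b

def sccOf (D : V → V → Prop) (S : Set V) (a : V) : Set V :=
  {b | ReachIn D S a b ∧ ReachIn D S b a}

section StrongComponents

variable {D : V → V → Prop} {S C : Set V} {a b : V}

theorem isSCCIn_sccOf (ha : a ∈ S) : IsSCCIn D S (sccOf D S a) := ⟨a, ha, rfl⟩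

theorem mem_sccOf_self (ha : a ∈ S) : a ∈ sccOf D S a := ⟨.refl ha, .refl ha⟩

theorem sccOf_subset : sccOf D S a ⊆ S := fun _ hb => hb.1.2.1

theorem sccOf_eq_of_mem (hb : b ∈ sccOf D S a) : sccOf D S b = sccOf D S a := by
  ext c
  exact ⟨fun hc => ⟨hb.1.trans hc.1, hc.2.trans hb.2⟩,
    fun hc => ⟨hb.2.trans hc.1, hc.2.trans hb.1⟩⟩

theorem stronglyConnectedIn_sccOf : StronglyConnectedIn D (sccOf D S a) := by
  intro u hu v hv
  refine ⟨hu, hv, ?_⟩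
  -- every vertex of an `S`-walk from `u` to `v` lies in the component of `u` and `v`
  have key : ∀ x, Relation.ReflTransGen (fun x y => y ∈ S ∧ D x y) x v → x ∈ sccOf D S a →
      Relation.ReflTransGen (fun x y => y ∈ sccOf D S a ∧ D x y) x v := by
    intro x hxv
    induction hxv using Relation.ReflTransGen.head_induction_on with
    | refl => exact fun _ => .refl
    | @head x y hxy hyv ih =>
      intro hx
      have hy : y ∈ sccOf D S a :=
        ⟨hx.1.trans (.single hx.1.2.1 hxy.1 hxy.2),
          (show ReachIn D S y v from ⟨hxy.1, hv.1.2.1, hyv⟩).trans hv.2⟩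
      exact .head ⟨hy, hxy.2⟩ (ih hy)
  exact key u (hu.2.trans hv.1).2.2 hu

theorem StronglyConnectedIn.exists_finite (hS : StronglyConnectedIn D S) (ha : a ∈ S)
    (hb : b ∈ S) : ∃ F : Set V, F.Finite ∧ F ⊆ S ∧ ReachIn D F a b ∧ ReachIn D F b a := by
  obtain ⟨F₁, hF₁, hF₁S, hab⟩ := (hS a ha b hb).exists_finite
  obtain ⟨F₂, hF₂, hF₂S, hba⟩ := (hS b hb a ha).exists_finite
  exact ⟨F₁ ∪ F₂, hF₁.union hF₂, union_subset hF₁S hF₂S, hab.mono subset_union_left,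
    hba.mono subset_union_right⟩

theorem IsSCCIn.subset (hC : IsSCCIn D S C) : C ⊆ S := by
  obtain ⟨a, -, rfl⟩ := hC
  exact sccOf_subset

theorem IsSCCIn.nonempty (hC : IsSCCIn D S C) : C.Nonempty := by
  obtain ⟨a, ha, rfl⟩ := hC
  exact ⟨a, mem_sccOf_self ha⟩

theorem IsSCCIn.stronglyConnectedIn (hC : IsSCCIn D S C) : StronglyConnectedIn D C := by
  obtain ⟨a, -, rfl⟩ := hC
  exact stronglyConnectedIn_sccOf

theorem mem_sccOf_of_closedWalk {l : List V} (hl : (a :: (l ++ [a])).IsChain D)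
    (hS : ∀ x ∈ a :: l, x ∈ S) {x : V} (hx : x ∈ a :: l) : x ∈ sccOf D S a := by
  have hS' : ∀ y ∈ a :: (l ++ [a]), y ∈ S := by
    simp only [← List.cons_append, List.mem_append, List.mem_singleton]
    rintro y (hy | rfl)
    exacts [hS y hy, hS y List.mem_cons_self]
  have hx' : x ∈ a :: (l ++ [a]) := by rw [← List.cons_append]; exact List.mem_append_left _ hx
  exact ⟨reachIn_head_of_isChain hl hS' rfl hx',
    reachIn_getLast_of_isChain hl hS' (by rw [← List.cons_append, List.getLast?_concat]) hx'⟩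

end StrongComponents

/-- Stated with closed walks: a set spans a closed walk iff it spans a directed cycle. -/
def IsAcyclicIn (D : V → V → Prop) (A : Set V) : Prop :=
  ∀ a l, (∀ x ∈ a :: l, x ∈ A) → ¬ (a :: (l ++ [a])).IsChain D

def CountablyDicolorable (D : V → V → Prop) (S : Set V) : Prop :=
  ∃ c : V → ℕ, ∀ n, IsAcyclicIn D (S ∩ c ⁻¹' {n})

section Coloring

variable {D : V → V → Prop} {A B S : Set V}

theorem IsAcyclicIn.mono (hAB : A ⊆ B) (hB : IsAcyclicIn D B) : IsAcyclicIn D A :=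
  fun a l hl => hB a l fun x hx => hAB (hl x hx)

theorem isAcyclicIn_of_subsingleton (hirr : ∀ a, ¬ D a a) (hA : A.Subsingleton) :
    IsAcyclicIn D A := by
  intro a l hl hchain
  cases l with
  | nil => exact hirr a (List.isChain_pair.1 hchain)
  | cons b l =>
    have hba : b = a := hA (hl b (by simp)) (hl a List.mem_cons_self)
    exact hirr a (hba ▸ (List.isChain_cons_cons.1 hchain).1)

theorem CountablyDicolorable.mono (hAB : A ⊆ B) (hB : CountablyDicolorable D B) :
    CountablyDicolorable D A :=
  let ⟨c, hc⟩ := hB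
  ⟨c, fun n => (hc n).mono (inter_subset_inter_left _ hAB)⟩

theorem countablyDicolorable_of_countable (hirr : ∀ a, ¬ D a a) (hA : A.Countable) :
    CountablyDicolorable D A := by
  obtain ⟨c, hc⟩ := countable_iff_exists_injOn.1 hA
  exact ⟨c, fun n => isAcyclicIn_of_subsingleton hirr fun x hx y hy =>
    hc hx.1 hy.1 (hx.2.trans hy.2.symm)⟩

theorem CountablyDicolorable.union (hA : CountablyDicolorable D A)
    (hB : CountablyDicolorable D B) : CountablyDicolorable D (A ∪ B) := by
  classical
  obtain ⟨cA, hcA⟩ := hA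
  obtain ⟨cB, hcB⟩ := hB
  refine ⟨fun v => if v ∈ B then 2 * cB v + 1 else 2 * cA v, fun n => ?_⟩
  rcases Nat.even_or_odd n with hn | hn
  · refine (hcA (n / 2)).mono ?_
    rintro v ⟨hv, hcv⟩
    simp only [mem_preimage, mem_singleton_iff] at hcv
    split_ifs at hcv with hvB
    · exact absurd (hcv ▸ hn) (by simp [parity_simps])
    · exact ⟨hv.resolve_right hvB, by simp only [mem_preimage, mem_singleton_iff]; omega⟩
  · refine (hcB (n / 2)).mono ?_
    rintro v ⟨-, hcv⟩
    simp only [mem_preimage, mem_singleton_iff] at hcv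
    split_ifs at hcv with hvB
    · exact ⟨hvB, by simp only [mem_preimage, mem_singleton_iff]; omega⟩
    · exact absurd (hcv ▸ hn) (by simp [parity_simps])

theorem countablyDicolorable_of_forall_isSCCIn
    (h : ∀ C, IsSCCIn D S C → CountablyDicolorable D C) : CountablyDicolorable D S := by
  choose! c hc using h
  -- a monochromatic closed walk stays inside one strong component
  refine ⟨fun v => c (sccOf D S v) v, fun n a l hl hchain => ?_⟩
  have haS : a ∈ S := (hl a List.mem_cons_self).1
  have hmem : ∀ x ∈ a :: l, x ∈ sccOf D S a := fun x hx =>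
    mem_sccOf_of_closedWalk hchain (fun y hy => (hl y hy).1) hx
  refine hc _ (isSCCIn_sccOf haS) n a l (fun x hx => ⟨hmem x hx, ?_⟩) hchain
  have := (hl x hx).2
  rwa [mem_preimage, sccOf_eq_of_mem (hmem x hx)] at this

end Coloring

theorem URankLE.countablyDicolorable {D : V → V → Prop} (hirr : ∀ a, ¬ D a a) {S : Set V}
    {α : Ordinal} (h : URankLE D {univ} S α) : CountablyDicolorable D S := by
  induction h with
  | base S α U hU hfin =>
    rw [Finset.mem_singleton.1 hU, univ_inter] at hfin
    exact countablyDicolorable_of_countable hirr hfin.countable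
  | step S α X r _ _ ih =>
    have hsplit : S ⊆ (S \ X) ∪ X := by rw [diff_union_self]; exact subset_union_left
    exact ((countablyDicolorable_of_forall_isSCCIn ih).union
      (countablyDicolorable_of_countable hirr X.countable_toSet)).mono hsplit

/-- An `A`–`B` path in `T`, in the sense of Diestel. -/
structure IsPathFromTo (D : V → V → Prop) (T A B : Set V) (l : List V) : Prop where
  path : IsPathList D l
  subset : ∀ x ∈ l, x ∈ T
  head_mem : ∀ a, l.head? = some a → a ∈ A
  getLast_mem : ∀ b, l.getLast? = some b → b ∈ B
  tail_not_mem : ∀ x ∈ l.tail, x ∉ A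
  dropLast_not_mem : ∀ x ∈ l.dropLast, x ∉ B

section Paths

variable {D : V → V → Prop} {T A B : Set V} {a b : V}

theorem isPathFromTo_singleton (hT : a ∈ T) (hA : a ∈ A) (hB : a ∈ B) :
    IsPathFromTo D T A B [a] :=
  ⟨⟨by simp, List.nodup_singleton a, .singleton a⟩, by simpa, by simpa, by simpa, by simp, by simp⟩

theorem IsPathFromTo.cons {l : List V} (hl : IsPathFromTo D T (insert b A) B l)
    (hhead : l.head? = some b) (hbA : b ∉ A) (haT : a ∈ T) (haA : a ∈ A) (haB : a ∉ B)
    (hab : D a b) : IsPathFromTo D T A B (a :: l) := by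
  obtain ⟨t, rfl⟩ := List.head?_eq_some_iff.1 hhead
  obtain ⟨⟨-, hnodup, hchain⟩, hT, -, hlast, htail, hdrop⟩ := hl
  have htA : ∀ x ∈ t, x ∉ A := fun x hx hxA => htail x hx (mem_insert_of_mem b hxA)
  refine ⟨⟨by simp, List.nodup_cons.2 ⟨?_, hnodup⟩, List.isChain_cons_cons.2 ⟨hab, hchain⟩⟩,
    ?_, by simpa, by simpa using hlast, ?_, ?_⟩
  · rintro (_ | ⟨_, hat⟩)
    exacts [hbA haA, htA a hat haA]
  · rintro x (_ | ⟨_, hx⟩)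
    exacts [haT, hT x hx]
  · rintro x (_ | ⟨_, hx⟩)
    exacts [hbA, htA x hx]
  · rw [List.dropLast_cons_cons]
    rintro x (_ | ⟨_, hx⟩)
    exacts [haB, hdrop x hx]

theorem exists_isPathFromTo (hab : ReachIn D T a b) (ha : a ∈ A) (hb : b ∈ B) :
    ∃ l, IsPathFromTo D T A B l := by
  obtain ⟨haT, hbT, hab⟩ := hab
  induction hab using Relation.ReflTransGen.head_induction_on generalizing A with
  | refl => exact ⟨[b], isPathFromTo_singleton hbT ha hb⟩
  | @head a c hac _ ih =>
    by_cases haB : a ∈ B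
    · exact ⟨[a], isPathFromTo_singleton haT ha haB⟩
    -- an `(insert c A)`–`B` path either is an `A`–`B` path or starts at `c` and extends by `a`
    obtain ⟨l, hl⟩ := ih (mem_insert c A) hac.1
    obtain ⟨d, hd⟩ : ∃ d, l.head? = some d :=
      Option.ne_none_iff_exists'.1 (by simpa using hl.path.1)
    by_cases hdA : d ∈ A
    · refine ⟨l, { hl with head_mem := fun x hx => ?_, tail_not_mem := fun x hx hxA => ?_ }⟩
      · exact Option.some_inj.1 (hx.symm.trans hd) ▸ hdA
      · exact hl.tail_not_mem x hx (mem_insert_of_mem c hxA)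
    · obtain rfl : d = c := (hl.head_mem d hd).resolve_right hdA
      exact ⟨a :: l, hl.cons hd hdA haT ha haB hac.2⟩

theorem IsPathFromTo.mem_inner {l : List V} (hl : IsPathFromTo D T A B l) {x : V}
    (hx : x ∈ l.tail.dropLast) : x ∈ T ∧ x ∉ A ∧ x ∉ B :=
  ⟨hl.subset x (List.mem_of_mem_tail (List.dropLast_subset _ hx)),
    hl.tail_not_mem x (List.dropLast_subset _ hx),
    hl.dropLast_not_mem x (by rw [← List.tail_dropLast] at hx; exact List.tail_subset _ hx)⟩

/-- A common inner vertex would reach and be reached from `sccOf D H p` inside `H`. -/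
theorem IsPathFromTo.disjoint_inner {H C : Set V} {p : V} {F R : List V}
    (hF : IsPathFromTo D (H ∪ C) (sccOf D H p) C F)
    (hR : IsPathFromTo D (H ∪ C) C (sccOf D H p) R)
    {x : V} (hxF : x ∈ F.tail.dropLast) (hxR : x ∈ R.tail.dropLast) : False := by
  have hxF' : x ∈ F.dropLast := by rw [← List.tail_dropLast] at hxF; exact List.tail_subset _ hxF
  have hxR' : x ∈ R.tail := List.dropLast_subset _ hxR
  obtain ⟨f, hf⟩ : ∃ f, F.head? = some f :=
    Option.ne_none_iff_exists'.1 (by simpa using hF.path.1)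
  obtain ⟨r, hr⟩ : ∃ r, R.getLast? = some r :=
    Option.ne_none_iff_exists'.1 (by simpa using hR.path.1)
  have hfx : ReachIn D H f x := by
    refine reachIn_head_of_isChain hF.path.2.2.dropLast (fun y hy => ?_) ?_ hxF'
    · exact (hF.subset y (List.dropLast_subset _ hy)).resolve_right (hF.dropLast_not_mem y hy)
    · have := List.length_pos_of_mem hxF'
      rw [List.head?_dropLast, if_pos (by simp at this; omega), hf]
  have hxr : ReachIn D H x r := by
    refine reachIn_getLast_of_isChain hR.path.2.2.tail (fun y hy => ?_) ?_ hxR'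
    · exact (hR.subset y (List.mem_of_mem_tail hy)).resolve_right (hR.tail_not_mem y hy)
    · have := List.length_pos_of_mem hxR'
      rw [List.getLast?_tail, if_neg (by simp at this; omega), hr]
  have hfB := hF.head_mem f hf
  have hrB := hR.getLast_mem r hr
  exact hF.tail_not_mem x (List.dropLast_subset _ hxF) ⟨hfB.1.trans hfx, hxr.trans hrB.2⟩

end Paths

theorem pairwise_disjoint_sdiff_succ {C : ℕ → Set V} (hC : Antitone C) :
    Pairwise (Disjoint on fun n => C n \ C (n + 1)) :=
  (pairwise_disjoint_on _).2 fun _ _ hmn => disjoint_left.2 fun _ hxm hxn =>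
    hxm.2 (hC (Nat.succ_le_of_lt hmn) hxn.1)
section Necklaces

universe u

variable {V : Type u} {D : V → V → Prop}

def Ranked (D : V → V → Prop) (S : Set V) : Prop :=
  ∃ α : Ordinal.{u}, URankLE D {univ} S α

theorem exists_isSCCIn_not_ranked {S : Set V} (hS : ¬ Ranked D S) (X : Finset V) :
    ∃ C, IsSCCIn D (S \ X) C ∧ ¬ Ranked D C := by
  by_contra! h
  choose! r hr using h
  refine hS ⟨Order.succ (⨆ C : {C // IsSCCIn D (S \ X) C}, r C), .step S _ X r (fun C hC => ?_) hr⟩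
  exact Order.lt_succ_of_le (le_ciSup Ordinal.bddAbove_of_small (⟨C, hC⟩ : {C // _}))

/-- The next bead is built inside `C` and has to contain the last vertices `p`, `q` of the two
previous connecting paths. -/
structure NecklaceStage (D : V → V → Prop) where
  C : Set V
  p : V
  q : V
  not_ranked : ¬ Ranked D C
  strong : StronglyConnectedIn D C
  p_mem : p ∈ C
  q_mem : q ∈ C

structure NecklaceStep (s : NecklaceStage D) where
  next : NecklaceStage D
  bead : Set V
  fwd : List V
  bwd : List V
  next_subset : next.C ⊆ s.C
  bead_finite : bead.Finite
  bead_subset : bead ⊆ s.C \ next.C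
  p_mem_bead : s.p ∈ bead
  q_mem_bead : s.q ∈ bead
  bead_strong : StronglyConnectedIn D bead
  fwd_path : IsPathList D fwd
  bwd_path : IsPathList D bwd
  fwd_head : ∀ a, fwd.head? = some a → a ∈ bead
  fwd_last : fwd.getLast? = some next.p
  bwd_head : bwd.head? = some next.q
  bwd_last : ∀ b, bwd.getLast? = some b → b ∈ bead
  fwd_inner : ∀ x ∈ fwd.tail.dropLast, x ∈ s.C \ next.C ∧ x ∉ bead
  bwd_inner : ∀ x ∈ bwd.tail.dropLast, x ∈ s.C \ next.C ∧ x ∉ bead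
  fwd_bwd_disj : ∀ x ∈ fwd.tail.dropLast, x ∉ bwd.tail.dropLast

theorem NecklaceStage.nonempty_step (s : NecklaceStage D) : Nonempty (NecklaceStep s) := by
  obtain ⟨C, p, q, hnr, hC, hp, hq⟩ := s
  obtain ⟨F, hF, hFC, hpq, hqp⟩ := hC.exists_finite hp hq
  obtain ⟨C', hC', hC'nr⟩ := exists_isSCCIn_not_ranked hnr hF.toFinset
  have hC'sub : C' ⊆ C \ F := by simpa using hC'.subset
  obtain ⟨a, ha⟩ := hC'.nonempty
  obtain ⟨G, hG, hGC, hpa, hap⟩ := hC.exists_finite hp (hC'sub ha).1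
  -- the bead is the strong component of `p` in the finite set `H` carrying all these walks
  set H := (F ∪ G) \ C'
  have hHC : H ⊆ C \ C' := sdiff_subset_sdiff_left (union_subset hFC hGC)
  have hFH : F ⊆ H := fun v hv => ⟨.inl hv, fun hvC' => (hC'sub hvC').2 hv⟩
  have hGH : G ⊆ H ∪ C' := fun v hv => by
    by_cases hvC' : v ∈ C'
    exacts [.inr hvC', .inl ⟨.inr hv, hvC'⟩]
  have hpB : p ∈ sccOf D H p := mem_sccOf_self (hFH hpq.1)
  obtain ⟨fwd, hfwd⟩ := exists_isPathFromTo (hpa.mono hGH) hpB ha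
  obtain ⟨bwd, hbwd⟩ := exists_isPathFromTo (hap.mono hGH) ha hpB
  obtain ⟨x, hx⟩ : ∃ x, fwd.getLast? = some x :=
    Option.ne_none_iff_exists'.1 (by simpa using hfwd.path.1)
  obtain ⟨y, hy⟩ : ∃ y, bwd.head? = some y :=
    Option.ne_none_iff_exists'.1 (by simpa using hbwd.path.1)
  have hKC : H ∪ C' ⊆ C := union_subset (fun v hv => (hHC hv).1) (fun v hv => (hC'sub hv).1)
  have hBsub : sccOf D H p ⊆ C \ C' := sccOf_subset.trans hHC
  exact ⟨{
    next := ⟨C', x, y, hC'nr, hC'.stronglyConnectedIn, hfwd.getLast_mem x hx, hbwd.head_mem y hy⟩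
    bead := sccOf D H p
    fwd := fwd
    bwd := bwd
    next_subset := fun v hv => (hC'sub hv).1
    bead_finite := (hF.union hG).sdiff.subset sccOf_subset
    bead_subset := hBsub
    p_mem_bead := hpB
    q_mem_bead := ⟨hpq.mono hFH, hqp.mono hFH⟩
    bead_strong := stronglyConnectedIn_sccOf
    fwd_path := hfwd.path
    bwd_path := hbwd.path
    fwd_head := hfwd.head_mem
    fwd_last := hx
    bwd_head := hy
    bwd_last := hbwd.getLast_mem
    fwd_inner := fun v hv =>
      have hv' := hfwd.mem_inner hv
      ⟨⟨hKC hv'.1, hv'.2.2⟩, hv'.2.1⟩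
    bwd_inner := fun v hv =>
      have hv' := hbwd.mem_inner hv
      ⟨⟨hKC hv'.1, hv'.2.1⟩, hv'.2.2⟩
    fwd_bwd_disj := fun _ hv hv' => hfwd.disjoint_inner hbwd hv hv' }⟩

noncomputable def NecklaceStage.step (s : NecklaceStage D) : NecklaceStep s :=
  Classical.choice s.nonempty_step

noncomputable def NecklaceStage.iterate (s : NecklaceStage D) : ℕ → NecklaceStage D
  | 0 => s
  | n + 1 => (s.iterate n).step.next

theorem NecklaceStage.nonempty_necklace (s : NecklaceStage D) : Nonempty (Necklace D) := by
  set S := s.iterate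
  -- all pieces built at stage `n` except the entry vertices lie in the layer `Cₙ \ Cₙ₊₁`
  have hlayer : ∀ {m n x}, m ≠ n → x ∈ (S m).C \ (S (m + 1)).C → x ∉ (S n).C \ (S (n + 1)).C :=
    fun hmn hx => disjoint_left.1 (pairwise_disjoint_sdiff_succ (C := fun n => (S n).C)
      (antitone_nat_of_succ_le fun n => (S n).step.next_subset) hmn) hx
  exact ⟨{
    bead := fun n => (S n).step.bead
    fwd := fun n => (S n).step.fwd
    bwd := fun n => (S n).step.bwd
    bead_fin := fun n => (S n).step.bead_finite
    bead_nonempty := fun n => ⟨_, (S n).step.p_mem_bead⟩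
    bead_disj := fun m n hmn => disjoint_left.2 fun x hxm hxn =>
      hlayer hmn ((S m).step.bead_subset hxm) ((S n).step.bead_subset hxn)
    bead_strong := fun n => (S n).step.bead_strong
    fwd_path := fun n => (S n).step.fwd_path
    bwd_path := fun n => (S n).step.bwd_path
    fwd_head := fun n => (S n).step.fwd_head
    fwd_last := fun n b hb =>
      Option.some_inj.1 (hb.symm.trans (S n).step.fwd_last) ▸ (S (n + 1)).step.p_mem_bead
    bwd_head := fun n a ha =>
      Option.some_inj.1 (ha.symm.trans (S n).step.bwd_head) ▸ (S (n + 1)).step.q_mem_bead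
    bwd_last := fun n => (S n).step.bwd_last
    fwd_inner := fun n x hx m hxm => by
      obtain rfl | hmn := eq_or_ne m n
      · exact ((S m).step.fwd_inner x hx).2 hxm
      · exact hlayer hmn ((S m).step.bead_subset hxm) ((S n).step.fwd_inner x hx).1
    bwd_inner := fun n x hx m hxm => by
      obtain rfl | hmn := eq_or_ne m n
      · exact ((S m).step.bwd_inner x hx).2 hxm
      · exact hlayer hmn ((S m).step.bead_subset hxm) ((S n).step.bwd_inner x hx).1
    fwd_fwd_disj := fun m n hmn x hxm hxn =>
      hlayer hmn ((S m).step.fwd_inner x hxm).1 ((S n).step.fwd_inner x hxn).1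
    bwd_bwd_disj := fun m n hmn x hxm hxn =>
      hlayer hmn ((S m).step.bwd_inner x hxm).1 ((S n).step.bwd_inner x hxn).1
    fwd_bwd_disj := fun m n x hxm hxn => by
      obtain rfl | hmn := eq_or_ne m n
      · exact (S m).step.fwd_bwd_disj x hxm hxn
      · exact hlayer hmn ((S m).step.fwd_inner x hxm).1 ((S n).step.bwd_inner x hxn).1 }⟩

theorem nonempty_necklace_of_not_ranked (h : ¬ Ranked D univ) : Nonempty (Necklace D) := by
  obtain ⟨C, hC, hCnr⟩ := exists_isSCCIn_not_ranked h ∅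
  obtain ⟨a, ha⟩ := hC.nonempty
  exact NecklaceStage.nonempty_necklace ⟨C, a, a, hCnr, hC.stronglyConnectedIn, ha, ha⟩

end Necklaces

/-- If a loopless digraph `D` contains no necklace, then its dichromatic number is countable:
the vertices can be partitioned into countably many classes inducing no directed cycle. -/
theorem dichromatic_number_countable (D : V → V → Prop) (hirr : ∀ a : V, ¬ D a a)
    (h : IsEmpty (Necklace D)) :
    ∃ f : V → ℕ, ∀ n : ℕ, ¬ ∃ (a : V) (l : List V),
      (∀ x ∈ a :: l, f x = n) ∧ (a :: l).Nodup ∧ List.Chain D a (l ++ [a]) := by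
  obtain ⟨α, hα⟩ : Ranked D univ := by
    by_contra hnr
    exact h.false (nonempty_necklace_of_not_ranked hnr).some
  obtain ⟨f, hf⟩ := hα.countablyDicolorable hirr
  exact ⟨f, fun n ⟨a, l, hfl, _, hcycle⟩ => hf n a l (fun x hx => ⟨trivial, hfl x hx⟩) hcycle⟩
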